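/- Let q be an odd prime power and π = Ps(χ, χ⁻¹) an irreducible principal series representation of PGL₂(F_q). The normalized Bessel function B_{π,ψ}(g) = (1/|N|) Σ_{n∈N} ψ^{−1}(n) χ_π(gn) satisfies B_{π,ψ}(h) = 0 for every h ∈ H with h ≠ 1, where H is the split diagonal torus. -/

import Mathlib

/-!
Since `a ≠ 1`, every element `h n` of the coset `hN` is `N`-conjugate to `h`. The character
`χ_π` is a class function, so it is constant on `hN`, and `B_{π,ψ}(h) = χ_π(h) · (1/q) ∑_b ψ(-b)`,
which vanishes because `ψ` is nontrivial.
-/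

open Matrix

noncomputable section

variable (F : Type) [Field F] [Fintype F] [DecidableEq F]

/-- The upper unitriangular matrix `[[1,b],[0,1]]` as an element of `GL₂(F_q)`,
identifying the unipotent radical `N` with `F_q`. -/
def unip (b : F) : GL (Fin 2) F where
  val := !![1, b; 0, 1]
  inv := !![1, -b; 0, 1]
  val_inv := by
    ext i j
    fin_cases i <;> fin_cases j <;>
      simp [Matrix.mul_apply, Fin.sum_univ_succ, Matrix.one_apply]
  inv_val := by
    ext i j
    fin_cases i <;> fin_cases j <;>
      simp [Matrix.mul_apply, Fin.sum_univ_succ, Matrix.one_apply]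

/-- The character `χ_π` of the principal series `π = Ps(χ, χ⁻¹)` of `PGL₂(F_q)`, given by
the induced character formula
`χ_π(g) = (1/|B|) ∑_{x ∈ GL₂(F_q), x g x⁻¹ ∈ B} χ((xgx⁻¹)₀₀ / (xgx⁻¹)₁₁)`,
where `B` is the Borel subgroup of upper triangular matrices, `|B| = q(q-1)²`. -/
def psChar (χ : MulChar F ℂ) (g : GL (Fin 2) F) : ℂ :=
  ((Fintype.card F * (Fintype.card F - 1) ^ 2 : ℕ) : ℂ)⁻¹ *
    ∑ x : GL (Fin 2) F,
      if ((x * g * x⁻¹ : GL (Fin 2) F) : Matrix (Fin 2) (Fin 2) F) 1 0 = 0 then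
        χ (((x * g * x⁻¹ : GL (Fin 2) F) : Matrix (Fin 2) (Fin 2) F) 0 0 /
            ((x * g * x⁻¹ : GL (Fin 2) F) : Matrix (Fin 2) (Fin 2) F) 1 1)
      else 0

/-- The normalized Bessel function of `π` with respect to a nontrivial additive character
`ψ` of `F_q ≅ N`: `B_{π,ψ}(g) = (1/|N|) ∑_{n ∈ N} ψ⁻¹(n) χ_π(gn)`. -/
def bessel (χ : MulChar F ℂ) (ψ : AddChar F ℂ) (g : GL (Fin 2) F) : ℂ :=
  ((Fintype.card F : ℕ) : ℂ)⁻¹ * ∑ b : F, ψ (-b) * psChar F χ (g * unip F b)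

lemma diag_mul_unip_eq_conj {K : Type} [Field K] {a d : K} (had : a ≠ d) (g : GL (Fin 2) K)
    (hg : (g : Matrix (Fin 2) (Fin 2) K) = !![a, 0; 0, d]) (b : K) :
    g * unip K b = unip K (a * b / (d - a)) * g * (unip K (a * b / (d - a)))⁻¹ := by
  have hda : d - a ≠ 0 := sub_ne_zero.2 had.symm
  have hc : a * b = a * -(a * b / (d - a)) + a * b / (d - a) * d := by
    field_simp
    ring
  refine Units.ext ?_
  simp only [Units.val_mul, hg, unip, Units.inv_mk, Matrix.mul_fin_two, mul_one, one_mul, mul_zero,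
    zero_mul, add_zero, zero_add]
  rw [← hc]

lemma psChar_conj (χ : MulChar F ℂ) (u g : GL (Fin 2) F) :
    psChar F χ (u * g * u⁻¹) = psChar F χ g := by
  unfold psChar
  congr 1
  refine Fintype.sum_bijective (· * u) (Group.mulRight_bijective u) _ _ fun x => ?_
  rw [show x * (u * g * u⁻¹) * x⁻¹ = (x * u) * g * (x * u)⁻¹ by group]

lemma bessel_eq_zero_of_psChar_mul_unip_eq {χ : MulChar F ℂ} {ψ : AddChar F ℂ} (hψ : ψ ≠ 1)
    {g : GL (Fin 2) F} (hg : ∀ b, psChar F χ (g * unip F b) = psChar F χ g) :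
    bessel F χ ψ g = 0 := by
  have hsum : ∑ b : F, ψ (-b) = 0 := AddChar.sum_eq_zero_of_ne_one (inv_ne_one.2 hψ)
  simp only [bessel, hg, ← Finset.sum_mul, hsum, zero_mul, mul_zero]

theorem stmt_16 (χ : MulChar F ℂ) (ψ : AddChar F ℂ) (hψ : ∃ x, ψ x ≠ 1)
    (a : F) (ha1 : a ≠ 1) (h : GL (Fin 2) F)
    (hh : (h : Matrix (Fin 2) (Fin 2) F) = !![a, 0; 0, 1]) :
    bessel F χ ψ h = 0 :=
  bessel_eq_zero_of_psChar_mul_unip_eq F (AddChar.ne_one_iff.2 hψ) fun b => by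
    rw [diag_mul_unip_eq_conj ha1 h hh, psChar_conj]

end
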